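/- arXiv:1710.10653 — 4 statements merged into one kernel-verified Lean document; each statement's English description precedes it below -/
import Mathlib

section
/- Let f : [0,1] → ℝ be absolutely continuous with square-integrable derivative, and let g : [0,1] → ℝ be a step function of the form g(t) = Σ_{j=1}^p c_j 1_{(t_{j-1}, t_j]}(t) with t_j = j/p. Then for any ε > 0, the function Δ = f - g satisfies ‖Δ‖² ≤ (1+ε)‖Δ‖²_p + (1+ε⁻¹)‖f'‖²/p², where ‖Δ‖² = ∫₀¹ Δ(t)² dt and ‖Δ‖²_p = (1/p)Σ_{j=1}^p Δ(t_j)². -/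
/-!
On each grid cell `((j-1)/p, j/p]` the step function is the constant `c j = g (j/p)`, so `Δ t`
differs from the grid value `Δ (j/p)` by `f (j/p) - f t = ∫_t^{j/p} f'`. Cauchy–Schwarz bounds the
square of this by `(1/p) ∫_cell f'²`, and the weighted inequality
`(x - y)² ≤ (1 + ε) x² + (1 + ε⁻¹) y²` splits `Δ t ²` accordingly. Integrating over a cell of
length `1/p` and summing over the cells gives the claim.
-/

open MeasureTheory Set

lemma sub_sq_le_one_add_mul_sq_add_one_add_inv_mul_sq {ε : ℝ} (hε : 0 < ε) (x y : ℝ) :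
    (x - y) ^ 2 ≤ (1 + ε) * x ^ 2 + (1 + ε⁻¹) * y ^ 2 := by
  have hsq : 0 ≤ ε⁻¹ * (ε * x + y) ^ 2 := by positivity
  have hexp : ε⁻¹ * (ε * x + y) ^ 2 = ε * x ^ 2 + 2 * x * y + ε⁻¹ * y ^ 2 := by
    field_simp
    ring
  nlinarith

lemma sq_integral_le_mul_integral_sq {a b : ℝ} (hab : a ≤ b) {h : ℝ → ℝ}
    (h1 : IntervalIntegrable h volume a b) (h2 : IntervalIntegrable (fun t => h t ^ 2) volume a b) :
    (∫ t in a..b, h t) ^ 2 ≤ (b - a) * ∫ t in a..b, h t ^ 2 := by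
  rcases hab.eq_or_lt with rfl | hlt
  · simp
  set S := ∫ t in a..b, h t with hS
  set m := S / (b - a) with hm
  have hba : 0 < b - a := sub_pos.2 hlt
  -- the variance of `h` about its mean value `m` is nonnegative
  have hvar : 0 ≤ ∫ t in a..b, (h t - m) ^ 2 :=
    intervalIntegral.integral_nonneg hab fun _ _ => sq_nonneg _
  have hexp : (∫ t in a..b, (h t - m) ^ 2) = (∫ t in a..b, h t ^ 2) - S ^ 2 / (b - a) := by
    have : (fun t => (h t - m) ^ 2) = fun t => (h t ^ 2 - 2 * m * h t) + m ^ 2 := by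
      funext t; ring
    rw [this, intervalIntegral.integral_add (h2.sub (h1.const_mul _)) intervalIntegrable_const,
      intervalIntegral.integral_sub h2 (h1.const_mul _), intervalIntegral.integral_const_mul,
      intervalIntegral.integral_const, smul_eq_mul, ← hS, hm]
    field_simp
    ring
  rw [hexp, sub_nonneg, div_le_iff₀ hba] at hvar
  linarith

lemma intervalIntegrable_of_hasDerivAt_of_sq {f f' : ℝ → ℝ} {a b : ℝ} (hab : a ≤ b)
    (hderiv : ∀ x ∈ Icc a b, HasDerivAt f (f' x) x)
    (hf'2 : IntervalIntegrable (fun t => f' t ^ 2) volume a b) :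
    IntervalIntegrable f' volume a b := by
  rw [intervalIntegrable_iff_integrableOn_Ioc_of_le hab] at hf'2 ⊢
  -- `f'` agrees with the measurable function `deriv f` on the interval
  have hmeas : AEStronglyMeasurable f' (volume.restrict (Ioc a b)) :=
    (measurable_deriv f).aestronglyMeasurable.congr <| ae_restrict_of_forall_mem measurableSet_Ioc
      fun x hx => (hderiv x (Ioc_subset_Icc_self hx)).deriv
  exact ((memLp_two_iff_integrable_sq hmeas).2 hf'2).integrable one_le_two

lemma sq_sub_le_mul_integral_sq_deriv {f f' : ℝ → ℝ} {a b t : ℝ} (ht : t ∈ Icc a b)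
    (hderiv : ∀ x ∈ Icc a b, HasDerivAt f (f' x) x)
    (hf'2 : IntervalIntegrable (fun t => f' t ^ 2) volume a b) :
    (f b - f t) ^ 2 ≤ (b - a) * ∫ s in a..b, f' s ^ 2 := by
  have hab : a ≤ b := ht.1.trans ht.2
  have hsub : uIcc t b ⊆ uIcc a b := by
    rw [uIcc_of_le ht.2, uIcc_of_le hab]
    exact Icc_subset_Icc_left ht.1
  have hf' := (intervalIntegrable_of_hasDerivAt_of_sq hab hderiv hf'2).mono_set hsub
  have hftc : ∫ s in t..b, f' s = f b - f t :=
    intervalIntegral.integral_eq_sub_of_hasDerivAt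
      (fun x hx => hderiv x (uIcc_of_le hab ▸ hsub hx)) hf'
  calc (f b - f t) ^ 2 = (∫ s in t..b, f' s) ^ 2 := by rw [hftc]
    _ ≤ (b - t) * ∫ s in t..b, f' s ^ 2 :=
        sq_integral_le_mul_integral_sq ht.2 hf' (hf'2.mono_set hsub)
    _ ≤ (b - a) * ∫ s in a..b, f' s ^ 2 := by
        gcongr
        · exact intervalIntegral.integral_nonneg ht.2 fun _ _ => sq_nonneg _
        · exact ht.1
        · exact intervalIntegral.integral_mono_interval ht.1 ht.2 le_rfl
            (ae_of_all _ fun _ => sq_nonneg _) hf'2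

lemma intervalIntegrable_sq_sub_of_eqOn_Ioc {f g : ℝ → ℝ} {a b c : ℝ} (hab : a ≤ b)
    (hf : ContinuousOn f (Icc a b)) (hg : ∀ t ∈ Ioc a b, g t = c) :
    IntervalIntegrable (fun t => (f t - g t) ^ 2) volume a b := by
  have hcont : ContinuousOn (fun t => (f t - c) ^ 2) (uIcc a b) :=
    uIcc_of_le hab ▸ (hf.sub continuousOn_const).pow 2
  exact hcont.intervalIntegrable.congr fun t ht => by rw [hg t (uIoc_of_le hab ▸ ht)]

lemma integral_sq_sub_le_of_eqOn_Ioc {f f' g : ℝ → ℝ} {a b c ε : ℝ} (hab : a < b)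
    (hderiv : ∀ x ∈ Icc a b, HasDerivAt f (f' x) x)
    (hf'2 : IntervalIntegrable (fun t => f' t ^ 2) volume a b) (hg : ∀ t ∈ Ioc a b, g t = c)
    (hε : 0 < ε) :
    ∫ t in a..b, (f t - g t) ^ 2
      ≤ (b - a) * ((1 + ε) * (f b - g b) ^ 2 + (1 + ε⁻¹) * ((b - a) * ∫ t in a..b, f' t ^ 2)) := by
  have hfg : ∫ t in a..b, (f t - g t) ^ 2 = ∫ t in a..b, (f t - c) ^ 2 :=
    intervalIntegral.integral_congr_ae <| ae_of_all _ fun t ht => by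
      rw [hg t (uIoc_of_le hab.le ▸ ht)]
  have hcont : ContinuousOn (fun t => (f t - c) ^ 2) (uIcc a b) :=
    uIcc_of_le hab.le ▸ ((HasDerivAt.continuousOn hderiv).sub continuousOn_const).pow 2
  rw [hfg, hg b ⟨hab, le_rfl⟩]
  calc ∫ t in a..b, (f t - c) ^ 2
      ≤ ∫ _ in a..b,
          ((1 + ε) * (f b - c) ^ 2 + (1 + ε⁻¹) * ((b - a) * ∫ t in a..b, f' t ^ 2)) := by
        refine intervalIntegral.integral_mono_on hab.le hcont.intervalIntegrable
          intervalIntegrable_const fun t ht => ?_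
        calc (f t - c) ^ 2 = ((f b - c) - (f b - f t)) ^ 2 := by ring
          _ ≤ (1 + ε) * (f b - c) ^ 2 + (1 + ε⁻¹) * (f b - f t) ^ 2 :=
            sub_sq_le_one_add_mul_sq_add_one_add_inv_mul_sq hε _ _
          _ ≤ _ := by gcongr; exact sq_sub_le_mul_integral_sq_deriv ht hderiv hf'2
    _ = _ := by rw [intervalIntegral.integral_const, smul_eq_mul]

lemma integral_zero_one_eq_sum_integral_grid {p : ℕ} (hp : p ≠ 0) {F : ℝ → ℝ}
    (hF : ∀ j ∈ Finset.Icc 1 p, IntervalIntegrable F volume (((j : ℝ) - 1) / p) ((j : ℝ) / p)) :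
    ∫ t in (0 : ℝ)..1, F t = ∑ j ∈ Finset.Icc 1 p, ∫ t in ((j : ℝ) - 1) / p..(j : ℝ) / p, F t := by
  have hcell : ∀ k < p, IntervalIntegrable F volume ((k : ℝ) / p) (((k + 1 : ℕ) : ℝ) / p) :=
    fun k hk => by simpa using hF (k + 1) (Finset.mem_Icc.2 ⟨le_add_self, hk⟩)
  have hsum := intervalIntegral.sum_integral_adjacent_intervals hcell
  simp only [CharP.cast_eq_zero, zero_div, div_self (Nat.cast_ne_zero.2 hp : (p : ℝ) ≠ 0)] at hsum
  have hshift :=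
    Finset.sum_Ico_add' (fun j : ℕ => ∫ t in ((j : ℝ) - 1) / p..(j : ℝ) / p, F t) 0 p 1
  rw [zero_add, Finset.Ico_add_one_right_eq_Icc] at hshift
  rw [← hshift, ← hsum, Finset.range_eq_Ico]
  simp

lemma Icc_grid_cell_subset_Icc_zero_one {p j : ℕ} (hj : j ∈ Finset.Icc 1 p) :
    Icc (((j : ℝ) - 1) / p) ((j : ℝ) / p) ⊆ Icc 0 1 := by
  obtain ⟨h1j, hjp⟩ := Finset.mem_Icc.1 hj
  have hp : (0 : ℝ) < p := by exact_mod_cast h1j.trans hjp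
  have h1j' : (1 : ℝ) ≤ j := by exact_mod_cast h1j
  exact Icc_subset_Icc (div_nonneg (by linarith) hp.le)
    (div_le_one_of_le₀ (by exact_mod_cast hjp) hp.le)

/-- For `f` absolutely continuous on `[0,1]` with square-integrable
derivative `f'` and `g` a step function constant on each `((j-1)/p, j/p]`, for any
`ε > 0` the difference `Δ = f - g` satisfies
`‖Δ‖² ≤ (1+ε) ‖Δ‖²_p + (1+ε⁻¹) ‖f'‖² / p²`. -/
theorem stmt0 (p : ℕ) (hp : 1 ≤ p) (f f' g : ℝ → ℝ) (c : ℕ → ℝ)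
    (hderiv : ∀ x ∈ Set.Icc (0:ℝ) 1, HasDerivAt f (f' x) x)
    (hf'2 : IntervalIntegrable (fun t => f' t ^ 2) volume 0 1)
    (hg : ∀ j ∈ Finset.Icc 1 p, ∀ t ∈ Set.Ioc (((j:ℝ) - 1) / p) ((j:ℝ) / p), g t = c j)
    (ε : ℝ) (hε : 0 < ε) :
    (∫ t in (0:ℝ)..1, (f t - g t) ^ 2)
      ≤ (1 + ε) * ((1 / (p:ℝ)) * ∑ j ∈ Finset.Icc 1 p, (f ((j:ℝ)/p) - g ((j:ℝ)/p)) ^ 2)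
        + (1 + ε⁻¹) * (∫ t in (0:ℝ)..1, f' t ^ 2) / (p:ℝ) ^ 2 := by
  have hp_ne : p ≠ 0 := Nat.one_le_iff_ne_zero.1 hp
  have hlen (j : ℕ) : (j : ℝ) / p - ((j : ℝ) - 1) / p = 1 / p := by ring
  have hlt (j : ℕ) : ((j : ℝ) - 1) / p < (j : ℝ) / p := by gcongr; linarith
  have hderiv_cell (j) (hj : j ∈ Finset.Icc 1 p) :
      ∀ x ∈ Icc (((j : ℝ) - 1) / p) ((j : ℝ) / p), HasDerivAt f (f' x) x :=
    fun x hx => hderiv x (Icc_grid_cell_subset_Icc_zero_one hj hx)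
  have hf'2_cell (j) (hj : j ∈ Finset.Icc 1 p) :
      IntervalIntegrable (fun t => f' t ^ 2) volume (((j : ℝ) - 1) / p) ((j : ℝ) / p) :=
    hf'2.mono_set <| by
      rw [uIcc_of_le (hlt j).le, uIcc_of_le zero_le_one]
      exact Icc_grid_cell_subset_Icc_zero_one hj
  calc ∫ t in (0:ℝ)..1, (f t - g t) ^ 2
      = ∑ j ∈ Finset.Icc 1 p, ∫ t in ((j : ℝ) - 1) / p..(j : ℝ) / p, (f t - g t) ^ 2 :=
        integral_zero_one_eq_sum_integral_grid hp_ne fun j hj =>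
          intervalIntegrable_sq_sub_of_eqOn_Ioc (hlt j).le
            (HasDerivAt.continuousOn (hderiv_cell j hj)) (hg j hj)
    _ ≤ ∑ j ∈ Finset.Icc 1 p, 1 / p * ((1 + ε) * (f ((j : ℝ) / p) - g ((j : ℝ) / p)) ^ 2
          + (1 + ε⁻¹) * (1 / p * ∫ t in ((j : ℝ) - 1) / p..(j : ℝ) / p, f' t ^ 2)) :=
        Finset.sum_le_sum fun j hj => by
          simpa only [hlen] using integral_sq_sub_le_of_eqOn_Ioc (hlt j) (hderiv_cell j hj)
            (hf'2_cell j hj) (hg j hj) hε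
    _ = _ := by
        rw [integral_zero_one_eq_sum_integral_grid hp_ne hf'2_cell, Finset.mul_sum,
          Finset.mul_sum, Finset.mul_sum, Finset.sum_div, ← Finset.sum_add_distrib]
        refine Finset.sum_congr rfl fun j _ => ?_
        field_simp
end

section
/- Let S : ℝ → ℝ be a 1-periodic, absolutely continuous function with absolutely integrable derivative. Define the discrete trigonometric Fourier coefficients θ̄_{j,p} = ∫₀¹ S(t) Ψ_{j,p}(t) dt where Ψ_{j,p}(t) = Σ_{l=1}^p φ_j(t_l) 1_{(t_{l-1}, t_l]}(t), t_l = l/p, and (φ_j) is the trigonometric basis. Then |θ̄_{1,p}| ≤ ‖S‖₁ and max_{2 ≤ j ≤ p} j |θ̄_{j,p}| ≤ 2√2 ‖S'‖₁, where ‖·‖₁ denotes the L¹[0,1] norm. -/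
open MeasureTheory intervalIntegral

/-- The trigonometric basis on `[0,1]`: `φ₁ = 1`, `φ_j(x) = √2 cos(2π[j/2]x)` for even `j`,
`φ_j(x) = √2 sin(2π[j/2]x)` for odd `j`. -/
noncomputable def trigBasis (j : ℕ) (x : ℝ) : ℝ :=
  if j = 1 then 1
  else if j % 2 = 0 then Real.sqrt 2 * Real.cos (2 * Real.pi * ((j / 2 : ℕ) : ℝ) * x)
  else Real.sqrt 2 * Real.sin (2 * Real.pi * ((j / 2 : ℕ) : ℝ) * x)

/-- The step-function basis `Ψ_{j,p}(t) = Σ_{l=1}^p φ_j(t_l) 1_{(t_{l-1}, t_l]}(t)`, `t_l = l/p`. -/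
noncomputable def PsiStep (j p : ℕ) (t : ℝ) : ℝ :=
  ∑ l ∈ Finset.Icc 1 p,
    trigBasis j ((l:ℝ)/p) * Set.indicator (Set.Ioc (((l:ℝ) - 1)/p) ((l:ℝ)/p)) (fun _ => (1:ℝ)) t

/-! Write `θ̄_{j,p} = Σ_l φ_j(t_l) B_l`, where `B_l` is the integral of `S` over the `l`-th cell.
For `j ≥ 2` the grid values `φ_j(t_l)` sum to zero over a full period, and their partial sums are
Dirichlet-kernel sums bounded by `√2 / sin (π [j/2] / p) ≤ √2 p / (2 [j/2])` (Jordan's inequality).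
Abel summation therefore reduces the claim to `Σ_l |B_{l+1} - B_l| ≤ ‖S'‖₁ / p`. With `G` the
primitive of `|S'|`, each difference is at most `∫_cell (G (t + 1/p) - G t) dt`; these add up to
`∫_{1-1/p}^1 G - ∫_0^{1/p} G ≤ G 1 / p`, as `G` is nondecreasing. -/

open Real Finset Set

theorem two_mul_sin_half_mul_sum_cos_add_mul (α θ : ℝ) (l : ℕ) :
    2 * sin (θ / 2) * ∑ m ∈ range l, cos (α + m * θ) =
      sin (α + (l - 1 / 2) * θ) - sin (α - θ / 2) := by
  induction l with
  | zero => simp only [range_zero, sum_empty, mul_zero, Nat.cast_zero]; ring_nf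
  | succ l ih =>
    have hneg : sin (θ / 2 - (α + l * θ)) = -sin (α + (l - 1 / 2) * θ) := by
      rw [← sin_neg]; ring_nf
    rw [sum_range_succ, mul_add, ih, two_mul_sin_mul_cos, hneg]
    push_cast
    ring_nf

theorem abs_sum_cos_add_mul_le (α : ℝ) {θ : ℝ} (hθ : sin (θ / 2) ≠ 0) (l : ℕ) :
    |∑ m ∈ range l, cos (α + m * θ)| ≤ 1 / |sin (θ / 2)| := by
  have h := congrArg abs (two_mul_sin_half_mul_sum_cos_add_mul α θ l)
  rw [abs_mul, abs_mul, abs_two] at h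
  have : |sin (α + (l - 1 / 2) * θ) - sin (α - θ / 2)| ≤ 2 :=
    (abs_sub _ _).trans <| by
      linarith [abs_sin_le_one (α + (l - 1 / 2) * θ), abs_sin_le_one (α - θ / 2)]
  rw [le_div_iff₀ (abs_pos.2 hθ)]
  nlinarith

theorem sum_cos_add_mul_eq_zero (α : ℝ) {θ : ℝ} (hθ : sin (θ / 2) ≠ 0) {l : ℕ}
    {k : ℤ} (hlθ : l * θ = k * (2 * π)) : ∑ m ∈ range l, cos (α + m * θ) = 0 := by
  have h := two_mul_sin_half_mul_sum_cos_add_mul α θ l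
  rw [show α + (l - 1 / 2) * θ = α - θ / 2 + k * (2 * π) by linear_combination hlθ,
    sin_add_int_mul_two_pi, sub_self] at h
  simpa [hθ] using h

theorem two_mul_le_sin_pi_mul {x : ℝ} (h0 : 0 ≤ x) (h1 : x ≤ 1 / 2) : 2 * x ≤ sin (π * x) := by
  have := mul_le_sin (x := π * x) (by positivity) (by nlinarith [pi_pos])
  rwa [← mul_assoc, div_mul_cancel₀ _ pi_ne_zero] at this

theorem exists_trigBasis_eq_sqrt_two_mul_cos {j : ℕ} (hj : j ≠ 1) :
    ∃ φ : ℝ, ∀ x, trigBasis j x = √2 * cos (2 * π * (j / 2 : ℕ) * x - φ) := by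
  by_cases he : j % 2 = 0
  · exact ⟨0, fun x => by simp [trigBasis, hj, he]⟩
  · exact ⟨π / 2, fun x => by simp [trigBasis, hj, he, cos_sub_pi_div_two]⟩

section Grid

variable {j p : ℕ}

theorem exists_trigBasis_grid_eq (hj : j ≠ 1) :
    ∃ α : ℝ, ∀ i : ℕ,
      trigBasis j ((i + 1) / p) = √2 * cos (α + i * (2 * π * (j / 2 : ℕ) / p)) := by
  obtain ⟨φ, hφ⟩ := exists_trigBasis_eq_sqrt_two_mul_cos hj
  exact ⟨2 * π * (j / 2 : ℕ) / p - φ, fun i => by rw [hφ]; ring_nf⟩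

theorem two_mul_div_le_sin_half_grid_angle (hj : 2 ≤ j) (hjp : j ≤ p) :
    2 * ((j / 2 : ℕ) : ℝ) / p ≤ sin (2 * π * (j / 2 : ℕ) / p / 2) := by
  have hp : (0 : ℝ) < p := by norm_cast; omega
  have hk : ((2 * (j / 2) : ℕ) : ℝ) ≤ p := by norm_cast; omega
  push_cast at hk
  convert two_mul_le_sin_pi_mul (x := (j / 2 : ℕ) / p) (by positivity)
    (by rw [div_le_iff₀ hp]; linarith) using 1
  · ring
  · congr 1; ring

theorem sin_half_grid_angle_pos (hj : 2 ≤ j) (hjp : j ≤ p) :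
    0 < sin (2 * π * (j / 2 : ℕ) / p / 2) := by
  refine lt_of_lt_of_le ?_ (two_mul_div_le_sin_half_grid_angle hj hjp)
  have : 0 < j / 2 := by omega
  have : 0 < p := by omega
  positivity

theorem sum_trigBasis_grid_eq_zero (hj : 2 ≤ j) (hjp : j ≤ p) :
    ∑ i ∈ range p, trigBasis j ((i + 1) / p) = 0 := by
  obtain ⟨α, hα⟩ := exists_trigBasis_grid_eq (p := p) (by omega : j ≠ 1)
  have hp : (p : ℝ) ≠ 0 := by norm_cast; omega
  simp only [hα, ← mul_sum]
  rw [sum_cos_add_mul_eq_zero α (sin_half_grid_angle_pos hj hjp).ne' (k := (j / 2 : ℕ))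
    (by rw [Int.cast_natCast]; field_simp), mul_zero]

theorem abs_sum_trigBasis_grid_le (hj : 2 ≤ j) (hjp : j ≤ p) (l : ℕ) :
    |∑ i ∈ range l, trigBasis j ((i + 1) / p)| ≤ √2 * p / (2 * (j / 2 : ℕ)) := by
  obtain ⟨α, hα⟩ := exists_trigBasis_grid_eq (p := p) (by omega : j ≠ 1)
  have hsin := sin_half_grid_angle_pos hj hjp
  have hk : (0 : ℝ) < 2 * (j / 2 : ℕ) / p := by
    have : 0 < j / 2 := by omega
    have : 0 < p := by omega
    positivity
  simp only [hα, ← mul_sum, abs_mul, abs_of_nonneg (sqrt_nonneg 2)]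
  calc √2 * |∑ i ∈ range l, cos (α + i * (2 * π * (j / 2 : ℕ) / p))|
      ≤ √2 * (1 / |sin (2 * π * (j / 2 : ℕ) / p / 2)|) := by
        gcongr; exact abs_sum_cos_add_mul_le α hsin.ne' l
    _ ≤ √2 * (1 / (2 * (j / 2 : ℕ) / p)) := by
        rw [abs_of_pos hsin]; gcongr; exact two_mul_div_le_sin_half_grid_angle hj hjp
    _ = √2 * p / (2 * (j / 2 : ℕ)) := by field_simp

end Grid

theorem abs_sum_mul_le_of_abs_partial_sum_le {b c : ℕ → ℝ} {n : ℕ} {M : ℝ}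
    (hc : ∑ i ∈ range (n + 1), c i = 0) (hM : ∀ l, |∑ i ∈ range l, c i| ≤ M) :
    |∑ i ∈ range (n + 1), b i * c i| ≤ M * ∑ i ∈ range n, |b (i + 1) - b i| := by
  have h := sum_range_by_parts b c (n + 1)
  simp only [smul_eq_mul, hc, mul_zero, zero_sub, add_tsub_cancel_right] at h
  rw [h, abs_neg, mul_sum]
  refine (abs_sum_le_sum_abs _ _).trans (sum_le_sum fun i _ => ?_)
  rw [abs_mul, mul_comm M]
  exact mul_le_mul_of_nonneg_left (hM _) (abs_nonneg _)

theorem integral_sub_comp_add_le_of_monotoneOn {G : ℝ → ℝ} {a b h : ℝ} (hab : a ≤ b)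
    (hh : 0 ≤ h) (hG : MonotoneOn G (Icc a (b + h))) :
    ∫ t in a..b, (G (t + h) - G t) ≤ h * (G (b + h) - G a) := by
  have hint : ∀ {x y}, x ∈ Icc a (b + h) → y ∈ Icc a (b + h) → IntervalIntegrable G volume x y :=
    fun hx hy => (hG.mono (uIcc_subset_Icc hx hy)).intervalIntegrable
  have ha : a ∈ Icc a (b + h) := ⟨le_rfl, by linarith⟩
  have hah : a + h ∈ Icc a (b + h) := ⟨by linarith, by linarith⟩
  have hb : b ∈ Icc a (b + h) := ⟨hab, by linarith⟩
  have hbh : b + h ∈ Icc a (b + h) := ⟨by linarith, le_rfl⟩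
  have upper : ∫ t in b..b + h, G t ≤ h * G (b + h) := by
    simpa using integral_mono_on (by linarith) (hint hb hbh) intervalIntegrable_const
      fun t ht => hG ⟨hab.trans ht.1, ht.2⟩ hbh ht.2
  have lower : h * G a ≤ ∫ t in a..a + h, G t := by
    simpa using integral_mono_on (by linarith) intervalIntegrable_const (hint ha hah)
      fun t ht => hG ha ⟨ht.1, by linarith [ht.2]⟩ ht.1
  rw [integral_sub (by simpa using (hint hah hbh).comp_add_right h) (hint ha hb),
    integral_comp_add_right, integral_interval_sub_interval_comm' (hint hah hbh) (hint ha hb)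
      (hint hah ha)]
  linarith

theorem abs_sub_le_integral_abs_of_hasDerivAt {S S' : ℝ → ℝ} {x y : ℝ} (hxy : x ≤ y)
    (hderiv : ∀ t ∈ Icc x y, HasDerivAt S (S' t) t) (hS' : IntervalIntegrable S' volume x y) :
    |S y - S x| ≤ ∫ t in x..y, |S' t| := by
  rw [← integral_eq_sub_of_hasDerivAt (by rwa [Set.uIcc_of_le hxy]) hS']
  exact abs_integral_le_integral_abs hxy

noncomputable def blockIntegral (S : ℝ → ℝ) (h : ℝ) (i : ℕ) : ℝ :=
  ∫ t in i * h..(i + 1) * h, S t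

section Blocks

variable {S S' G : ℝ → ℝ} {h : ℝ}

theorem IntervalIntegrable.mono_block (hh : 0 ≤ h) {n i : ℕ} (hi : i < n)
    (hS : IntervalIntegrable S volume 0 (n * h)) :
    IntervalIntegrable S volume (i * h) ((i + 1) * h) := by
  have hi' : (i : ℝ) + 1 ≤ n := by exact_mod_cast hi
  refine hS.mono_set ?_
  have hle : (i : ℝ) * h ≤ (i + 1) * h := by gcongr; linarith
  rw [Set.uIcc_of_le (by positivity : (0 : ℝ) ≤ n * h), Set.uIcc_of_le hle]
  exact Icc_subset_Icc (by positivity) (by gcongr)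

theorem sum_blockIntegral (hh : 0 ≤ h) (n : ℕ) (hS : IntervalIntegrable S volume 0 (n * h)) :
    ∑ i ∈ range n, blockIntegral S h i = ∫ t in 0..n * h, S t := by
  have := sum_integral_adjacent_intervals (a := fun i : ℕ => i * h) (f := S) (μ := volume)
    fun i hi => by push_cast; exact hS.mono_block hh hi
  push_cast at this
  simpa [blockIntegral] using this

theorem blockIntegral_succ (i : ℕ) :
    blockIntegral S h (i + 1) = ∫ t in i * h..(i + 1) * h, S (t + h) := by
  rw [blockIntegral, integral_comp_add_right]
  push_cast
  ring_nf

theorem abs_blockIntegral_succ_sub_le {F : ℝ → ℝ} (hh : 0 ≤ h) (hS : Continuous S) (i : ℕ)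
    (hF : IntervalIntegrable F volume (i * h) ((i + 1) * h))
    (hSF : ∀ t ∈ Icc (i * h) ((i + 1) * h), |S (t + h) - S t| ≤ F t) :
    |blockIntegral S h (i + 1) - blockIntegral S h i| ≤ blockIntegral F h i := by
  have hle : (i : ℝ) * h ≤ (i + 1) * h := by gcongr; linarith
  have hSh : Continuous fun t => S (t + h) := by fun_prop
  rw [blockIntegral_succ, blockIntegral, blockIntegral,
    ← integral_sub (hSh.intervalIntegrable _ _) (hS.intervalIntegrable _ _)]
  exact (abs_integral_le_integral_abs hle).trans
    (integral_mono_on hle ((hSh.sub hS).abs.intervalIntegrable _ _) hF hSF)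

theorem sum_abs_blockIntegral_succ_sub_le_of_abs_sub_le (hh : 0 ≤ h) (n : ℕ) (hS : Continuous S)
    (hG : MonotoneOn G (Icc 0 ((n + 1) * h)))
    (hSG : ∀ x ∈ Icc 0 ((n + 1) * h), ∀ y ∈ Icc 0 ((n + 1) * h), x ≤ y →
      |S y - S x| ≤ G y - G x) :
    ∑ i ∈ range n, |blockIntegral S h (i + 1) - blockIntegral S h i|
      ≤ h * (G ((n + 1) * h) - G 0) := by
  have hL : (n + 1 : ℝ) * h = n * h + h := by ring
  have hGh : MonotoneOn (fun t => G (t + h)) (Icc 0 (n * h)) := fun x hx y hy hxy =>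
    hG ⟨by linarith [hx.1], by linarith [hx.2]⟩ ⟨by linarith [hy.1], by linarith [hy.2]⟩
      (by linarith)
  have hF : IntervalIntegrable (fun t => G (t + h) - G t) volume 0 (n * h) := by
    have hsub : Icc 0 (n * h) ⊆ Icc 0 ((n + 1) * h) := Icc_subset_Icc le_rfl (by linarith)
    rw [← Set.uIcc_of_le (by positivity : (0 : ℝ) ≤ n * h)] at hGh hsub
    exact hGh.intervalIntegrable.sub (hG.mono hsub).intervalIntegrable
  calc ∑ i ∈ range n, |blockIntegral S h (i + 1) - blockIntegral S h i|
      ≤ ∑ i ∈ range n, blockIntegral (fun t => G (t + h) - G t) h i := by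
        refine sum_le_sum fun i hi => abs_blockIntegral_succ_sub_le hh hS i
          (hF.mono_block hh (mem_range.1 hi)) fun t ht => ?_
        have hi : (i : ℝ) + 1 ≤ n := by exact_mod_cast mem_range.1 hi
        have hih : (i + 1 : ℝ) * h ≤ n * h := by gcongr
        have ht0 : 0 ≤ t := le_trans (by positivity) ht.1
        exact hSG t ⟨ht0, by linarith [ht.2]⟩ (t + h) ⟨by linarith, by linarith [ht.2]⟩
          (by linarith)
    _ = ∫ t in 0..n * h, (G (t + h) - G t) := sum_blockIntegral hh n hF
    _ ≤ h * (G ((n + 1) * h) - G 0) := by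
        rw [hL]
        exact integral_sub_comp_add_le_of_monotoneOn (by positivity) hh (hL ▸ hG)

theorem sum_abs_blockIntegral_succ_sub_le (hh : 0 ≤ h) (n : ℕ)
    (hderiv : ∀ x, HasDerivAt S (S' x) x)
    (hS' : IntervalIntegrable S' volume 0 ((n + 1) * h)) :
    ∑ i ∈ range n, |blockIntegral S h (i + 1) - blockIntegral S h i|
      ≤ h * ∫ t in 0..(n + 1) * h, |S' t| := by
  set L := (n + 1 : ℝ) * h
  have hS'sub : ∀ {x y}, x ∈ Icc 0 L → y ∈ Icc 0 L → IntervalIntegrable S' volume x y :=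
    fun hx hy => hS'.mono_set <| by
      rw [Set.uIcc_of_le (by positivity : (0 : ℝ) ≤ L)]; exact uIcc_subset_Icc hx hy
  have h0 : (0 : ℝ) ∈ Icc 0 L := ⟨le_rfl, by positivity⟩
  have hprim : ∀ {x y}, x ∈ Icc 0 L → y ∈ Icc 0 L →
      (∫ t in 0..y, |S' t|) - ∫ t in 0..x, |S' t| = ∫ t in x..y, |S' t| := fun hx hy =>
    integral_interval_sub_left (hS'sub h0 hy).abs (hS'sub h0 hx).abs
  have := sum_abs_blockIntegral_succ_sub_le_of_abs_sub_le hh n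
    (continuous_iff_continuousAt.2 fun x => (hderiv x).continuousAt)
    (G := fun x => ∫ t in 0..x, |S' t|)
    (fun x hx y hy hxy => sub_nonneg.1 <| (hprim hx hy).symm ▸
      integral_nonneg hxy fun _ _ => abs_nonneg _)
    (fun x hx y hy hxy => (hprim hx hy).symm ▸
      abs_sub_le_integral_abs_of_hasDerivAt hxy (fun t _ => hderiv t) (hS'sub hx hy))
  simpa using this

end Blocks

theorem PsiStep_eq_sum_range (j p : ℕ) (t : ℝ) :
    PsiStep j p t = ∑ i ∈ range p, trigBasis j ((i + 1) / p) *
      (Ioc (i * (p : ℝ)⁻¹) ((i + 1) * (p : ℝ)⁻¹)).indicator (fun _ => 1) t := by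
  rw [PsiStep, ← Finset.Ico_add_one_right_eq_Icc, sum_Ico_eq_sum_range, add_tsub_cancel_right]
  refine sum_congr rfl fun i _ => ?_
  rw [add_comm 1 i]
  push_cast
  simp only [add_sub_cancel_right, div_eq_mul_inv]

theorem integral_mul_PsiStep {S : ℝ → ℝ} (hS : IntervalIntegrable S volume 0 1) (j p : ℕ) :
    ∫ t in 0..1, S t * PsiStep j p t =
      ∑ i ∈ range p, blockIntegral S (p : ℝ)⁻¹ i * trigBasis j ((i + 1) / p) := by
  have hblock : ∀ i ∈ range p,
      Ioc (i * (p : ℝ)⁻¹) ((i + 1) * (p : ℝ)⁻¹) ⊆ Ioc 0 1 ∧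
        (i : ℝ) * (p : ℝ)⁻¹ ≤ (i + 1) * (p : ℝ)⁻¹ := by
    intro i hi
    have hi : (i : ℝ) + 1 ≤ p := by exact_mod_cast mem_range.1 hi
    have hp : (0 : ℝ) < p := by linarith [i.cast_nonneg (α := ℝ)]
    refine ⟨Ioc_subset_Ioc (by positivity) ?_, by gcongr; linarith⟩
    rwa [← div_eq_mul_inv, div_le_one hp]
  simp only [PsiStep_eq_sum_range, mul_sum, mul_left_comm (S _), ← indicator_mul_right, mul_one]
  rw [intervalIntegral.integral_finsetSum fun i hi => ?_]
  · refine sum_congr rfl fun i hi => ?_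
    rw [intervalIntegral.integral_const_mul, mul_comm, blockIntegral,
      intervalIntegral.integral_of_le zero_le_one, setIntegral_indicator measurableSet_Ioc,
      inter_eq_self_of_subset_right (hblock i hi).1,
      ← intervalIntegral.integral_of_le (hblock i hi).2]
  · refine (Integrable.intervalIntegrable ?_).const_mul _
    exact (hS.1.mono_set (hblock i hi).1).integrable_indicator measurableSet_Ioc

theorem stmt2_general (p : ℕ) (hp : 2 ≤ p) (S S' : ℝ → ℝ)
    (hderiv : ∀ x, HasDerivAt S (S' x) x)
    (hS'int : IntervalIntegrable S' volume 0 1) :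
    (|∫ t in (0:ℝ)..1, S t * PsiStep 1 p t| ≤ ∫ t in (0:ℝ)..1, |S t|) ∧
    (∀ j : ℕ, 2 ≤ j → j ≤ p →
      (j:ℝ) * |∫ t in (0:ℝ)..1, S t * PsiStep j p t|
        ≤ 2 * Real.sqrt 2 * ∫ t in (0:ℝ)..1, |S' t|) := by
  have hS : IntervalIntegrable S volume 0 1 :=
    (continuous_iff_continuousAt.2 fun x => (hderiv x).continuousAt).intervalIntegrable 0 1
  obtain ⟨n, rfl⟩ : ∃ n, p = n + 1 := ⟨p - 1, by omega⟩
  have hmesh : ((n + 1 : ℕ) : ℝ) * ((n + 1 : ℕ) : ℝ)⁻¹ = 1 := mul_inv_cancel₀ (by positivity)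
  have hcast : (n : ℝ) + 1 = (n + 1 : ℕ) := by push_cast; rfl
  have hh : (0 : ℝ) ≤ ((n + 1 : ℕ) : ℝ)⁻¹ := by positivity
  refine ⟨?_, fun j hj hjp => ?_⟩
  · have hsum := sum_blockIntegral (S := S) hh (n + 1) (by rwa [hmesh])
    rw [hmesh] at hsum
    simp only [integral_mul_PsiStep hS, trigBasis, if_pos, mul_one, hsum]
    exact abs_integral_le_integral_abs zero_le_one
  · have hk : (0 : ℝ) < (j / 2 : ℕ) := by norm_cast; omega
    have hj2 : (j : ℝ) / (2 * (j / 2 : ℕ)) ≤ 2 := by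
      rw [div_le_iff₀ (by positivity)]; norm_cast; omega
    have hI : 0 ≤ ∫ t in 0..1, |S' t| := integral_nonneg zero_le_one fun _ _ => abs_nonneg _
    have habel := abs_sum_mul_le_of_abs_partial_sum_le (b := blockIntegral S ((n + 1 : ℕ) : ℝ)⁻¹)
      (sum_trigBasis_grid_eq_zero hj hjp) (abs_sum_trigBasis_grid_le hj hjp)
    have hvar := sum_abs_blockIntegral_succ_sub_le hh n hderiv (by rwa [hcast, hmesh])
    rw [hcast, hmesh] at hvar
    rw [integral_mul_PsiStep hS]
    calc (j : ℝ) * |∑ i ∈ range (n + 1),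
          blockIntegral S ((n + 1 : ℕ) : ℝ)⁻¹ i * trigBasis j ((i + 1) / (n + 1 : ℕ))|
        ≤ j * (√2 * (n + 1 : ℕ) / (2 * (j / 2 : ℕ)) *
            (((n + 1 : ℕ) : ℝ)⁻¹ * ∫ t in 0..1, |S' t|)) := by
          gcongr; exact habel.trans (by gcongr)
      _ = j / (2 * (j / 2 : ℕ)) * (√2 * ∫ t in 0..1, |S' t|) := by field_simp
      _ ≤ 2 * √2 * ∫ t in 0..1, |S' t| := by
          rw [mul_assoc]; exact mul_le_mul_of_nonneg_right hj2 (by positivity)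

/-- for a 1-periodic absolutely continuous `S` with absolutely integrable
derivative `S'`, the coefficients `θ̄_{j,p} = ∫₀¹ S Ψ_{j,p}` satisfy `|θ̄_{1,p}| ≤ ‖S‖₁`
and `j |θ̄_{j,p}| ≤ 2√2 ‖S'‖₁` for `2 ≤ j ≤ p`. -/
theorem stmt2 (p : ℕ) (hp : 2 ≤ p) (S S' : ℝ → ℝ)
    (hper : Function.Periodic S 1)
    (hderiv : ∀ x, HasDerivAt S (S' x) x)
    (hS'int : IntervalIntegrable S' volume 0 1) :
    (|∫ t in (0:ℝ)..1, S t * PsiStep 1 p t| ≤ ∫ t in (0:ℝ)..1, |S t|) ∧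
    (∀ j : ℕ, 2 ≤ j → j ≤ p →
      (j:ℝ) * |∫ t in (0:ℝ)..1, S t * PsiStep j p t|
        ≤ 2 * Real.sqrt 2 * ∫ t in (0:ℝ)..1, |S' t|) :=
  stmt2_general p hp S S' hderiv hS'int
end

section
/- For any integer p ≥ 2 and any r > 0, the discrete Fourier coefficients θ_{j,p} = (1/p) Σ_{i=1}^p S(t_i) φ_j(t_i) of any function S in the Sobolev ball W¹_r satisfy the uniform bound max_{1 ≤ j ≤ p} |θ_{j,p} − θ_j| ≤ 2π √r · j / p, where θ_j = ∫₀¹ S(t) φ_j(t) dt. -/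
/-
The function `g = S φ_j` is C¹ with `|g'| ≤ √2 |S'| + √2 π j |S|`, since `|φ_j| ≤ √2` and
`|φ_j'| ≤ √2 π j`. On each cell `[(i-1)/p, i/p]` the right-endpoint rule errs by at most
`(1/p) ∫ |g'|` over the cell, so the whole Riemann sum errs by at most `(1/p) ∫₀¹ |g'|`.
By Cauchy–Schwarz on `[0,1]`, `∫ |S|` and `∫ |S'|` are at most `√r`, and
`√2 + √2 π j ≤ 2 π j` for `j ≥ 1`.
-/

open MeasureTheory intervalIntegral

open Real

noncomputable def trigBasisDeriv (j : ℕ) (x : ℝ) : ℝ :=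
  if j = 1 then 0
  else if j % 2 = 0 then
    -(√2 * (2 * π * ((j / 2 : ℕ) : ℝ)) * sin (2 * π * ((j / 2 : ℕ) : ℝ) * x))
  else √2 * (2 * π * ((j / 2 : ℕ) : ℝ)) * cos (2 * π * ((j / 2 : ℕ) : ℝ) * x)

section TrigBasis

variable (j : ℕ)

lemma hasDerivAt_trigBasis (x : ℝ) : HasDerivAt (trigBasis j) (trigBasisDeriv j x) x := by
  have hlin : HasDerivAt (fun y ↦ 2 * π * ((j / 2 : ℕ) : ℝ) * y) (2 * π * ((j / 2 : ℕ) : ℝ)) x := by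
    simpa using (hasDerivAt_id x).const_mul (2 * π * ((j / 2 : ℕ) : ℝ))
  unfold trigBasis trigBasisDeriv
  split_ifs
  · exact hasDerivAt_const x 1
  · exact (hlin.cos.const_mul √2).congr_deriv (by ring)
  · exact (hlin.sin.const_mul √2).congr_deriv (by ring)

lemma continuous_trigBasis : Continuous (trigBasis j) :=
  continuous_iff_continuousAt.2 fun x ↦ (hasDerivAt_trigBasis j x).continuousAt

lemma continuous_trigBasisDeriv : Continuous (trigBasisDeriv j) := by
  unfold trigBasisDeriv
  split_ifs <;> fun_prop

lemma abs_trigBasis_le (x : ℝ) : |trigBasis j x| ≤ √2 := by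
  have h_one_le : (1 : ℝ) ≤ √2 := Real.one_le_sqrt.2 (by norm_num)
  unfold trigBasis
  split_ifs
  · simp [h_one_le]
  · rw [abs_mul, abs_of_nonneg (sqrt_nonneg 2)]
    exact mul_le_of_le_one_right (sqrt_nonneg 2) (abs_cos_le_one _)
  · rw [abs_mul, abs_of_nonneg (sqrt_nonneg 2)]
    exact mul_le_of_le_one_right (sqrt_nonneg 2) (abs_sin_le_one _)

lemma abs_trigBasisDeriv_le (x : ℝ) : |trigBasisDeriv j x| ≤ √2 * π * j := by
  have h_freq : 2 * π * ((j / 2 : ℕ) : ℝ) ≤ π * j := by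
    have : ((j / 2 : ℕ) : ℝ) * 2 ≤ j := by exact_mod_cast Nat.div_mul_le_self j 2
    nlinarith [pi_pos]
  have h_amp : ∀ t : ℝ, |t| ≤ 1 → |√2 * (2 * π * ((j / 2 : ℕ) : ℝ)) * t| ≤ √2 * π * j := by
    intro t ht
    rw [abs_mul, abs_of_nonneg (by positivity), mul_assoc √2 π]
    calc √2 * (2 * π * ((j / 2 : ℕ) : ℝ)) * |t| ≤ √2 * (π * j) * 1 := by gcongr
      _ = √2 * (π * j) := mul_one _
  unfold trigBasisDeriv
  split_ifs
  · simp only [abs_zero]; positivity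
  · rw [abs_neg]; exact h_amp _ (abs_sin_le_one _)
  · exact h_amp _ (abs_cos_le_one _)

end TrigBasis

section Quadrature

variable {g G : ℝ → ℝ}

lemma abs_sub_le_integral_abs_of_hasDerivAt_s4 (hg : ∀ x, HasDerivAt g (G x) x)
    (hG : Continuous G) {c d t : ℝ} (ht : t ∈ Set.Icc c d) :
    |g d - g t| ≤ ∫ s in c..d, |G s| := by
  rw [← integral_eq_sub_of_hasDerivAt (fun x _ ↦ hg x) (hG.intervalIntegrable t d)]
  calc |∫ s in t..d, G s| ≤ ∫ s in t..d, |G s| := abs_integral_le_integral_abs ht.2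
    _ ≤ ∫ s in c..d, |G s| := by
      rw [← integral_add_adjacent_intervals (hG.abs.intervalIntegrable c t)
        (hG.abs.intervalIntegrable t d)]
      have : 0 ≤ ∫ s in c..t, |G s| := integral_nonneg ht.1 fun s _ ↦ abs_nonneg _
      linarith

lemma abs_sub_mul_sub_integral_le (hg : ∀ x, HasDerivAt g (G x) x) (hG : Continuous G)
    {c d : ℝ} (hcd : c ≤ d) :
    |(d - c) * g d - ∫ t in c..d, g t| ≤ (d - c) * ∫ t in c..d, |G t| := by
  have hgc : Continuous g := continuous_iff_continuousAt.2 fun x ↦ (hg x).continuousAt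
  have h_eq : (d - c) * g d - ∫ t in c..d, g t = ∫ t in c..d, (g d - g t) := by
    rw [integral_sub intervalIntegrable_const (hgc.intervalIntegrable c d),
      intervalIntegral.integral_const, smul_eq_mul]
  rw [h_eq]
  calc |∫ t in c..d, (g d - g t)| ≤ ∫ t in c..d, |g d - g t| := abs_integral_le_integral_abs hcd
    _ ≤ ∫ _ in c..d, ∫ s in c..d, |G s| :=
      integral_mono_on hcd ((continuous_const.sub hgc).abs.intervalIntegrable c d)
        intervalIntegrable_const fun t ht ↦ abs_sub_le_integral_abs_of_hasDerivAt_s4 hg hG ht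
    _ = (d - c) * ∫ t in c..d, |G t| := by rw [intervalIntegral.integral_const, smul_eq_mul]

lemma abs_riemannSum_sub_integral_le (hg : ∀ x, HasDerivAt g (G x) x) (hG : Continuous G)
    {p : ℕ} (hp : 0 < p) :
    |(1 / (p : ℝ)) * (∑ i ∈ Finset.Icc 1 p, g ((i : ℝ) / p)) - ∫ t in (0 : ℝ)..1, g t|
      ≤ (1 / (p : ℝ)) * ∫ t in (0 : ℝ)..1, |G t| := by
  have hgc : Continuous g := continuous_iff_continuousAt.2 fun x ↦ (hg x).continuousAt
  set a : ℕ → ℝ := fun i ↦ (i : ℝ) / p with ha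
  have h_step : ∀ k, a (k + 1) - a k = 1 / p := fun k ↦ by simp only [ha]; push_cast; ring
  have h_mono : ∀ k, a k ≤ a (k + 1) := fun k ↦ by
    have := h_step k
    have : (0 : ℝ) < 1 / p := by positivity
    linarith
  have h_ends : a 0 = 0 ∧ a p = 1 := ⟨by simp [ha], div_self (by positivity)⟩
  have h_split : ∀ f : ℝ → ℝ, Continuous f →
      ∑ k ∈ Finset.range p, ∫ t in a k..a (k + 1), f t = ∫ t in (0 : ℝ)..1, f t := fun f hf ↦ by
    rw [sum_integral_adjacent_intervals fun k _ ↦ hf.intervalIntegrable _ _, h_ends.1, h_ends.2]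
  have h_sum : (1 / (p : ℝ)) * ∑ i ∈ Finset.Icc 1 p, g ((i : ℝ) / p)
      = ∑ k ∈ Finset.range p, (a (k + 1) - a k) * g (a (k + 1)) := by
    rw [← Finset.Ico_add_one_right_eq_Icc, Finset.sum_Ico_eq_sum_range, Finset.mul_sum]
    refine Finset.sum_congr rfl fun k _ ↦ ?_
    rw [h_step, add_comm 1 k]
  rw [h_sum, ← h_split g hgc, ← h_split _ hG.abs, Finset.mul_sum, ← Finset.sum_sub_distrib]
  refine (Finset.abs_sum_le_sum_abs _ _).trans (Finset.sum_le_sum fun k _ ↦ ?_)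
  simpa only [h_step] using abs_sub_mul_sub_integral_le hg hG (h_mono k)

end Quadrature

lemma integral_abs_le_sqrt_integral_sq {u : ℝ → ℝ} (hu : Continuous u) :
    ∫ t in (0 : ℝ)..1, |u t| ≤ √(∫ t in (0 : ℝ)..1, u t ^ 2) := by
  set A := ∫ t in (0 : ℝ)..1, |u t|
  have hA : 0 ≤ A := integral_nonneg zero_le_one fun t _ ↦ abs_nonneg _
  rw [Real.le_sqrt hA (integral_nonneg zero_le_one fun t _ ↦ sq_nonneg _)]
  have h_var : ∫ t in (0 : ℝ)..1, (|u t| - A) ^ 2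
      = (∫ t in (0 : ℝ)..1, u t ^ 2) - 2 * A * A + A ^ 2 := by
    simp_rw [sub_sq, sq_abs]
    rw [intervalIntegral.integral_add, intervalIntegral.integral_sub,
      intervalIntegral.integral_mul_const, intervalIntegral.integral_const_mul,
      intervalIntegral.integral_const, sub_zero, one_smul]
    all_goals first
      | exact intervalIntegrable_const
      | exact Continuous.intervalIntegrable (by fun_prop) 0 1
  have h_nonneg : 0 ≤ ∫ t in (0 : ℝ)..1, (|u t| - A) ^ 2 :=
    integral_nonneg zero_le_one fun t _ ↦ sq_nonneg _
  nlinarith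

lemma sqrt_two_add_sqrt_two_mul_pi_mul_le {x : ℝ} (hx : 1 ≤ x) : √2 + √2 * π * x ≤ 2 * π * x := by
  have h_sqrt : √2 ≤ 3 / 2 := by
    rw [Real.sqrt_le_left (by norm_num)]; norm_num
  have h_pix : 3 ≤ π * x := by nlinarith [pi_gt_three]
  nlinarith [mul_nonneg (by linarith : (0 : ℝ) ≤ 3 / 2 - √2) (by linarith : (0 : ℝ) ≤ π * x - 3)]

lemma integral_abs_deriv_mul_trigBasis_le {S S' : ℝ → ℝ} (hS : Continuous S)
    (hS' : Continuous S') (j : ℕ) :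
    ∫ t in (0 : ℝ)..1, |S' t * trigBasis j t + S t * trigBasisDeriv j t|
      ≤ √2 * (∫ t in (0 : ℝ)..1, |S' t|) + √2 * π * j * ∫ t in (0 : ℝ)..1, |S t| := by
  have h_pointwise : ∀ t ∈ Set.Icc (0 : ℝ) 1, |S' t * trigBasis j t + S t * trigBasisDeriv j t|
      ≤ √2 * |S' t| + √2 * π * j * |S t| := fun t _ ↦ by
    refine (abs_add_le _ _).trans ?_
    rw [abs_mul, abs_mul, mul_comm √2, mul_comm _ |S t|]
    gcongr
    exacts [abs_trigBasis_le j t, abs_trigBasisDeriv_le j t]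
  rw [← intervalIntegral.integral_const_mul, ← intervalIntegral.integral_const_mul,
    ← intervalIntegral.integral_add (Continuous.intervalIntegrable (by fun_prop) 0 1)
      (Continuous.intervalIntegrable (by fun_prop) 0 1)]
  refine integral_mono_on zero_le_one ?_ (Continuous.intervalIntegrable (by fun_prop) 0 1)
    h_pointwise
  exact ((hS'.mul (continuous_trigBasis j)).add
    (hS.mul (continuous_trigBasisDeriv j))).abs.intervalIntegrable 0 1

lemma integral_abs_le_sqrt_of_integral_sq_add_le {u v : ℝ → ℝ} {r : ℝ} (hu : Continuous u)
    (hball : (∫ t in (0 : ℝ)..1, u t ^ 2) + (∫ t in (0 : ℝ)..1, v t ^ 2) ≤ r) :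
    ∫ t in (0 : ℝ)..1, |u t| ≤ √r := by
  have : 0 ≤ ∫ t in (0 : ℝ)..1, v t ^ 2 := integral_nonneg zero_le_one fun t _ ↦ sq_nonneg _
  exact (integral_abs_le_sqrt_integral_sq hu).trans (sqrt_le_sqrt (by linarith))

theorem stmt4_general (p : ℕ) (hp : 2 ≤ p) (r : ℝ)
    (S S' : ℝ → ℝ)
    (hderiv : ∀ x, HasDerivAt S (S' x) x)
    (hS'cont : Continuous S')
    (hball : (∫ t in (0:ℝ)..1, S t ^ 2) + (∫ t in (0:ℝ)..1, S' t ^ 2) ≤ r) :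
    ∀ j : ℕ, 1 ≤ j → j ≤ p →
      |(1 / (p:ℝ)) * (∑ i ∈ Finset.Icc 1 p, S ((i:ℝ)/p) * trigBasis j ((i:ℝ)/p))
          - ∫ t in (0:ℝ)..1, S t * trigBasis j t|
        ≤ 2 * Real.pi * Real.sqrt r * (j:ℝ) / (p:ℝ) := by
  intro j hj _
  have hS : Continuous S := continuous_iff_continuousAt.2 fun x ↦ (hderiv x).continuousAt
  have h_S := integral_abs_le_sqrt_of_integral_sq_add_le hS hball
  have h_S' := integral_abs_le_sqrt_of_integral_sq_add_le hS'cont ((add_comm _ _).trans_le hball)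
  have h_deriv : ∫ t in (0 : ℝ)..1, |S' t * trigBasis j t + S t * trigBasisDeriv j t|
      ≤ 2 * π * √r * j := calc
    _ ≤ √2 * (∫ t in (0 : ℝ)..1, |S' t|) + √2 * π * j * ∫ t in (0 : ℝ)..1, |S t| :=
      integral_abs_deriv_mul_trigBasis_le hS hS'cont j
    _ ≤ (√2 + √2 * π * j) * √r := by rw [add_mul]; gcongr
    _ ≤ 2 * π * j * √r := by
      gcongr; exact sqrt_two_add_sqrt_two_mul_pi_mul_le (by exact_mod_cast hj)
    _ = 2 * π * √r * j := by ring
  have h_cont : Continuous fun t ↦ S' t * trigBasis j t + S t * trigBasisDeriv j t :=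
    (hS'cont.mul (continuous_trigBasis j)).add (hS.mul (continuous_trigBasisDeriv j))
  calc _ ≤ (1 / (p : ℝ)) * ∫ t in (0 : ℝ)..1, |S' t * trigBasis j t + S t * trigBasisDeriv j t| :=
        abs_riemannSum_sub_integral_le (fun x ↦ (hderiv x).mul (hasDerivAt_trigBasis j x))
          h_cont (by omega)
    _ ≤ (1 / (p : ℝ)) * (2 * π * √r * j) := by gcongr
    _ = 2 * Real.pi * Real.sqrt r * (j : ℝ) / (p : ℝ) := by ring

/-- for any `p ≥ 2`, `r > 0` and any `S` in the Sobolev ball `W¹_r`, the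
discrete Fourier coefficients `θ_{j,p} = (1/p) Σ_{i=1}^p S(t_i) φ_j(t_i)` satisfy
`|θ_{j,p} − θ_j| ≤ 2π √r j / p` uniformly for `1 ≤ j ≤ p`, where `θ_j = ∫₀¹ S φ_j`. -/
theorem stmt4 (p : ℕ) (hp : 2 ≤ p) (r : ℝ) (hr : 0 < r)
    (S S' : ℝ → ℝ)
    (hper : Function.Periodic S 1)
    (hderiv : ∀ x, HasDerivAt S (S' x) x)
    (hS'cont : Continuous S')
    (hball : (∫ t in (0:ℝ)..1, S t ^ 2) + (∫ t in (0:ℝ)..1, S' t ^ 2) ≤ r) :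
    ∀ j : ℕ, 1 ≤ j → j ≤ p →
      |(1 / (p:ℝ)) * (∑ i ∈ Finset.Icc 1 p, S ((i:ℝ)/p) * trigBasis j ((i:ℝ)/p))
          - ∫ t in (0:ℝ)..1, S t * trigBasis j t|
        ≤ 2 * Real.pi * Real.sqrt r * (j:ℝ) / (p:ℝ) :=
  stmt4_general p hp r S S' hderiv hS'cont hball
end

section
/- For any integer p ≥ 2 and any r > 0, the correction coefficients h_{j,p}(S) = Σ_{l=1}^p ∫_{t_{l-1}}^{t_l} φ_j(t_l)(S(t) − S(t_l)) dt of any function S in the Sobolev ball W²_r satisfy Σ_{j=1}^p h_{j,p}² ≤ 3 r p⁻². -/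
open MeasureTheory intervalIntegral

/-!
Write `a_l = ∫_{t_{l-1}}^{t_l} (S t - S t_l) dt`, so that `h_j = Σ_l φ_j(t_l) a_l`. Pairing the
cosine and the sine of each frequency `k`, `h_{2k}² + h_{2k+1}² ≤ 3 |Σ_l a_l e^{2πikl/p}|²`, and the
discrete Parseval identity over `k < p` gives `Σ_j h_j² ≤ 3p Σ_l a_l²`. On each subinterval,
Cauchy–Schwarz and the fundamental theorem of calculus give `a_l² ≤ p⁻³ ∫_{t_{l-1}}^{t_l} S'²`,
and `∫₀¹ S'² ≤ r`.
-/

open Finset Real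
open scoped ComplexConjugate

theorem sq_intervalIntegral_le_mul {f : ℝ → ℝ} (hf : Continuous f) {a b : ℝ} (hab : a ≤ b) :
    (∫ t in a..b, f t) ^ 2 ≤ (b - a) * ∫ t in a..b, f t ^ 2 := by
  rcases hab.eq_or_lt with rfl | hlt
  · simp
  set I := ∫ t in a..b, f t
  set c := I / (b - a)
  have hfi : IntervalIntegrable f volume a b := hf.intervalIntegrable a b
  have hf2i : IntervalIntegrable (fun t => f t ^ 2) volume a b :=
    (hf.pow 2).intervalIntegrable a b
  -- the variance of `f` about its mean `c` is nonnegative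
  have hvar : ∫ t in a..b, (f t - c) ^ 2
      = (∫ t in a..b, f t ^ 2) - 2 * c * I + c ^ 2 * (b - a) := by
    have hsq : (fun t => (f t - c) ^ 2) = fun t => (f t ^ 2 - (2 * c) * f t) + c ^ 2 := by
      ext; ring
    rw [hsq, integral_add (hf2i.sub (hfi.const_mul _)) intervalIntegrable_const,
      integral_sub hf2i (hfi.const_mul _), intervalIntegral.integral_const_mul,
      intervalIntegral.integral_const, smul_eq_mul]
    ring
  have h0 : 0 ≤ ∫ t in a..b, (f t - c) ^ 2 := integral_nonneg hab fun _ _ => sq_nonneg _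
  have hc : c * (b - a) = I := div_mul_cancel₀ I (sub_ne_zero.2 hlt.ne')
  nlinarith [mul_nonneg (sub_nonneg.2 hab) h0]

theorem sq_sub_le_mul_integral_deriv_sq {S S' : ℝ → ℝ} (hS : ∀ x, HasDerivAt S (S' x) x)
    (hS' : Continuous S') {u v t : ℝ} (ht : t ∈ Set.Icc u v) :
    (S t - S v) ^ 2 ≤ (v - u) * ∫ s in u..v, S' s ^ 2 := by
  have hftc : ∫ s in t..v, S' s = S v - S t :=
    integral_eq_sub_of_hasDerivAt (fun x _ => hS x) (hS'.intervalIntegrable t v)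
  have hmono : ∫ s in t..v, S' s ^ 2 ≤ ∫ s in u..v, S' s ^ 2 :=
    integral_mono_interval ht.1 ht.2 le_rfl (Filter.Eventually.of_forall fun _ => sq_nonneg _)
      ((hS'.pow 2).intervalIntegrable u v)
  calc (S t - S v) ^ 2 = (∫ s in t..v, S' s) ^ 2 := by rw [hftc]; ring
    _ ≤ (v - t) * ∫ s in t..v, S' s ^ 2 := sq_intervalIntegral_le_mul hS' ht.2
    _ ≤ (v - u) * ∫ s in u..v, S' s ^ 2 :=
      mul_le_mul (by linarith [ht.1]) hmono (integral_nonneg ht.2 fun _ _ => sq_nonneg _)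
        (by linarith [ht.1, ht.2])

theorem sq_integral_sub_right_le {S S' : ℝ → ℝ} (hS : ∀ x, HasDerivAt S (S' x) x)
    (hS' : Continuous S') {u v : ℝ} (huv : u ≤ v) :
    (∫ t in u..v, (S t - S v)) ^ 2 ≤ (v - u) ^ 3 * ∫ t in u..v, S' t ^ 2 := by
  have hScont : Continuous S := continuous_iff_continuousAt.2 fun x => (hS x).continuousAt
  have hpt : ∫ t in u..v, (S t - S v) ^ 2 ≤ (v - u) * ((v - u) * ∫ s in u..v, S' s ^ 2) := by
    simpa using integral_mono_on (μ := volume) huv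
      (((hScont.sub continuous_const).pow 2).intervalIntegrable u v)
      intervalIntegrable_const fun t ht => sq_sub_le_mul_integral_deriv_sq hS hS' ht
  calc (∫ t in u..v, (S t - S v)) ^ 2 ≤ (v - u) * ∫ t in u..v, (S t - S v) ^ 2 :=
        sq_intervalIntegral_le_mul (hScont.sub continuous_const) huv
    _ ≤ (v - u) * ((v - u) * ((v - u) * ∫ s in u..v, S' s ^ 2)) :=
        mul_le_mul_of_nonneg_left hpt (sub_nonneg.2 huv)
    _ = (v - u) ^ 3 * ∫ t in u..v, S' t ^ 2 := by ring

theorem sum_intervalIntegral_Icc_div {g : ℝ → ℝ} (hg : Continuous g) {p : ℕ} (hp : p ≠ 0) :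
    ∑ l ∈ Icc 1 p, ∫ t in ((l : ℝ) - 1) / p..(l : ℝ) / p, g t = ∫ t in (0 : ℝ)..1, g t := by
  rw [← Ico_add_one_right_eq_Icc, sum_Ico_eq_sum_range, add_tsub_cancel_right]
  convert sum_integral_adjacent_intervals (μ := volume) (a := fun k : ℕ => (k : ℝ) / p)
    (n := p) (fun k _ => hg.intervalIntegrable _ _) using 1
  · refine sum_congr rfl fun k _ => ?_
    congr 1 <;> push_cast <;> ring
  · simp [hp]

theorem sum_range_exp_eq_ite {p : ℕ} (hp : p ≠ 0) (n : ℤ) :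
    ∑ k ∈ range p, Complex.exp (↑(2 * π * k * (n / p)) * Complex.I)
      = if (p : ℤ) ∣ n then (p : ℂ) else 0 := by
  set ζ := Complex.exp (2 * π * Complex.I / p)
  have hζ : IsPrimitiveRoot ζ p := Complex.isPrimitiveRoot_exp p hp
  have hpow : ∀ k : ℕ, Complex.exp (↑(2 * π * k * (n / p)) * Complex.I) = (ζ ^ n) ^ k :=
    fun k => by rw [← Complex.exp_int_mul, ← Complex.exp_nat_mul]; push_cast; ring_nf
  simp_rw [hpow]
  split_ifs with hdvd
  · simp [(hζ.zpow_eq_one_iff_dvd n).2 hdvd]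
  · have hw : ζ ^ n ≠ 1 := mt (hζ.zpow_eq_one_iff_dvd n).1 hdvd
    have hwp : (ζ ^ n) ^ p = 1 := by
      rw [← zpow_natCast, ← zpow_mul, mul_comm n, zpow_mul, zpow_natCast, hζ.pow_eq_one,
        one_zpow]
    rw [geom_sum_eq hw, hwp, sub_self, zero_div]

theorem sum_range_sq_norm_sum_exp {p : ℕ} (hp : p ≠ 0) {s : Finset ℕ}
    (hs : ∀ l ∈ s, ∀ m ∈ s, (p : ℤ) ∣ ((l : ℤ) - m) → l = m) (x : ℕ → ℝ) :
    ∑ k ∈ range p, ‖∑ l ∈ s, Complex.exp (↑(2 * π * k * (l / p)) * Complex.I) * x l‖ ^ 2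
      = p * ∑ l ∈ s, x l ^ 2 := by
  apply Complex.ofReal_injective
  have hconj : ∀ k l : ℕ, conj (Complex.exp (↑(2 * π * k * (l / p)) * Complex.I) * x l)
      = Complex.exp (↑(-(2 * π * k * (l / p))) * Complex.I) * x l := fun k l => by
    rw [map_mul, ← Complex.exp_conj, Complex.conj_ofReal]; simp [map_ofNat]
  have hprod : ∀ k l m : ℕ, Complex.exp (↑(2 * π * k * (l / p)) * Complex.I) * x l
      * (Complex.exp (↑(-(2 * π * k * (m / p))) * Complex.I) * x m)
      = x l * x m * Complex.exp (↑(2 * π * k * (((l : ℤ) - m : ℤ) / p)) * Complex.I) :=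
    fun k l m => by
    rw [mul_mul_mul_comm, ← Complex.exp_add]; push_cast; ring_nf
  simp only [Complex.ofReal_sum, Complex.ofReal_pow, Complex.ofReal_mul (p : ℝ),
    Complex.ofReal_natCast]
  simp_rw [← Complex.mul_conj', map_sum, hconj, sum_mul_sum, hprod]
  rw [sum_comm, mul_sum]
  refine sum_congr rfl fun l hl => ?_
  rw [sum_comm, sum_eq_single l]
  · rw [← mul_sum, sum_range_exp_eq_ite hp, if_pos (by simp)]
    ring
  · intro m hm hml
    rw [← mul_sum, sum_range_exp_eq_ite hp, if_neg fun h => hml (hs l hl m hm h).symm, mul_zero]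
  · exact fun h => absurd hl h

theorem sum_range_two_mul {M : Type*} [AddCommMonoid M] (g : ℕ → M) (n : ℕ) :
    ∑ j ∈ range (2 * n), g j = ∑ k ∈ range n, (g (2 * k) + g (2 * k + 1)) := by
  induction n with
  | zero => simp
  | succ n ih => rw [mul_add_one, sum_range_succ, sum_range_succ, ih, sum_range_succ, add_assoc]

theorem trigBasis_two_mul (k : ℕ) (x : ℝ) :
    trigBasis (2 * k) x = √2 * cos (2 * π * k * x) := by
  simp [trigBasis, show 2 * k ≠ 1 by omega]

theorem trigBasis_two_mul_add_one {k : ℕ} (hk : k ≠ 0) (x : ℝ) :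
    trigBasis (2 * k + 1) x = √2 * sin (2 * π * k * x) := by
  simp [trigBasis, hk, show (2 * k + 1) / 2 = k by omega]

-- The constant `3` comes from `k = 0`, where `trigBasis 0 = √2` and `trigBasis 1 = 1`;
-- every `k ≠ 0` satisfies the bound with `2`.
theorem sq_sum_trigBasis_add_sq_le (s : Finset ℕ) (x a : ℕ → ℝ) (k : ℕ) :
    (∑ l ∈ s, trigBasis (2 * k) (x l) * a l) ^ 2 + (∑ l ∈ s, trigBasis (2 * k + 1) (x l) * a l) ^ 2
      ≤ 3 * ‖∑ l ∈ s, Complex.exp (↑(2 * π * k * x l) * Complex.I) * a l‖ ^ 2 := by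
  set z := ∑ l ∈ s, Complex.exp (↑(2 * π * k * x l) * Complex.I) * a l
  have hre : z.re = ∑ l ∈ s, cos (2 * π * k * x l) * a l := by
    simp only [z, Complex.re_sum, Complex.re_mul_ofReal, Complex.exp_ofReal_mul_I_re]
  have him : z.im = ∑ l ∈ s, sin (2 * π * k * x l) * a l := by
    simp only [z, Complex.im_sum, Complex.im_mul_ofReal, Complex.exp_ofReal_mul_I_im]
  have hsqrt : √2 ^ 2 = 2 := Real.sq_sqrt zero_le_two
  rw [Complex.sq_norm, Complex.normSq_apply, hre, him]
  simp only [trigBasis_two_mul, mul_assoc, ← mul_sum, mul_pow, hsqrt]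
  rcases eq_or_ne k 0 with rfl | hk
  · simp only [trigBasis, Nat.cast_zero, zero_mul, mul_zero, cos_zero, sin_zero, one_mul,
      zero_add, ↓reduceIte, sum_const_zero, add_zero]
    exact le_of_eq (by ring)
  · simp only [trigBasis_two_mul_add_one hk, mul_assoc, ← mul_sum, mul_pow, hsqrt]
    nlinarith [sq_nonneg (∑ l ∈ s, cos (2 * π * k * x l) * a l),
      sq_nonneg (∑ l ∈ s, sin (2 * π * k * x l) * a l)]

theorem sum_sq_sum_trigBasis_le {p : ℕ} (hp : p ≠ 0) (a : ℕ → ℝ) :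
    ∑ j ∈ Icc 1 p, (∑ l ∈ Icc 1 p, trigBasis j ((l : ℝ) / p) * a l) ^ 2
      ≤ 3 * p * ∑ l ∈ Icc 1 p, a l ^ 2 := by
  have hinj : ∀ l ∈ Icc 1 p, ∀ m ∈ Icc 1 p, (p : ℤ) ∣ ((l : ℤ) - m) → l = m := by
    intro l hl m hm hdvd
    simp only [mem_Icc] at hl hm
    have := Int.eq_zero_of_abs_lt_dvd hdvd (abs_lt.2 ⟨by omega, by omega⟩)
    omega
  -- Padding with the indices `0` and `p < j < 2p` makes every cosine meet its sine.
  calc ∑ j ∈ Icc 1 p, (∑ l ∈ Icc 1 p, trigBasis j ((l : ℝ) / p) * a l) ^ 2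
      ≤ ∑ j ∈ range (2 * p), (∑ l ∈ Icc 1 p, trigBasis j ((l : ℝ) / p) * a l) ^ 2 :=
        sum_le_sum_of_subset_of_nonneg
          (fun j hj => by simp only [mem_Icc, mem_range] at hj ⊢; omega) fun _ _ _ => sq_nonneg _
    _ = ∑ k ∈ range p, ((∑ l ∈ Icc 1 p, trigBasis (2 * k) ((l : ℝ) / p) * a l) ^ 2
          + (∑ l ∈ Icc 1 p, trigBasis (2 * k + 1) ((l : ℝ) / p) * a l) ^ 2) :=
        sum_range_two_mul _ p
    _ ≤ ∑ k ∈ range p,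
          3 * ‖∑ l ∈ Icc 1 p, Complex.exp (↑(2 * π * k * (l / p)) * Complex.I) * a l‖ ^ 2 :=
        sum_le_sum fun k _ => sq_sum_trigBasis_add_sq_le _ (fun l => (l : ℝ) / p) a k
    _ = 3 * p * ∑ l ∈ Icc 1 p, a l ^ 2 := by
      rw [← mul_sum, sum_range_sq_norm_sum_exp hp hinj, mul_assoc]

theorem sum_sq_integral_sub_le {S S' : ℝ → ℝ} (hS : ∀ x, HasDerivAt S (S' x) x)
    (hS' : Continuous S') {p : ℕ} (hp : p ≠ 0) :
    ∑ l ∈ Icc 1 p, (∫ t in ((l : ℝ) - 1) / p..(l : ℝ) / p, (S t - S ((l : ℝ) / p))) ^ 2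
      ≤ (∫ t in (0 : ℝ)..1, S' t ^ 2) / p ^ 3 := by
  have hpR : (0 : ℝ) < p := Nat.cast_pos.2 (Nat.pos_of_ne_zero hp)
  have hlen : ∀ l : ℕ, (l : ℝ) / p - ((l : ℝ) - 1) / p = 1 / p := fun l => by ring
  calc ∑ l ∈ Icc 1 p, (∫ t in ((l : ℝ) - 1) / p..(l : ℝ) / p, (S t - S ((l : ℝ) / p))) ^ 2
      ≤ ∑ l ∈ Icc 1 p, (1 / p) ^ 3 * ∫ t in ((l : ℝ) - 1) / p..(l : ℝ) / p, S' t ^ 2 :=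
        sum_le_sum fun l _ => hlen l ▸ sq_integral_sub_right_le hS hS'
          (by linarith [hlen l, one_div_pos.2 hpR])
    _ = (∫ t in (0 : ℝ)..1, S' t ^ 2) / p ^ 3 := by
      rw [← mul_sum, sum_intervalIntegral_Icc_div (g := fun t => S' t ^ 2) (hS'.pow 2) hp]
      ring

theorem stmt5_general (p : ℕ) (hp : 2 ≤ p) (r : ℝ)
    (S S' S'' : ℝ → ℝ)
    (hderiv : ∀ x, HasDerivAt S (S' x) x)
    (hderiv' : ∀ x, HasDerivAt S' (S'' x) x)
    (hball : (∫ t in (0:ℝ)..1, S t ^ 2) + (∫ t in (0:ℝ)..1, S' t ^ 2)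
        + (∫ t in (0:ℝ)..1, S'' t ^ 2) ≤ r) :
    ∑ j ∈ Finset.Icc 1 p,
        (∑ l ∈ Finset.Icc 1 p,
          ∫ t in (((l:ℝ) - 1)/p)..((l:ℝ)/p), trigBasis j ((l:ℝ)/p) * (S t - S ((l:ℝ)/p))) ^ 2
      ≤ 3 * r / (p:ℝ) ^ 2 := by
  have hp0 : p ≠ 0 := by omega
  have hS' : Continuous S' := continuous_iff_continuousAt.2 fun x => (hderiv' x).continuousAt
  have hS'r : ∫ t in (0 : ℝ)..1, S' t ^ 2 ≤ r := by
    have h0 : 0 ≤ ∫ t in (0 : ℝ)..1, S t ^ 2 := integral_nonneg zero_le_one fun _ _ => sq_nonneg _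
    have h2 : 0 ≤ ∫ t in (0 : ℝ)..1, S'' t ^ 2 :=
      integral_nonneg zero_le_one fun _ _ => sq_nonneg _
    linarith
  simp only [intervalIntegral.integral_const_mul]
  calc _ ≤ 3 * p * ((∫ t in (0 : ℝ)..1, S' t ^ 2) / p ^ 3) :=
        (sum_sq_sum_trigBasis_le hp0 _).trans
          (by gcongr; exact sum_sq_integral_sub_le hderiv hS' hp0)
    _ ≤ 3 * p * (r / p ^ 3) := by gcongr
    _ = 3 * r / p ^ 2 := by field_simp

/-- for any `p ≥ 2`, `r > 0` and `S` in the Sobolev ball `W²_r`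
(twice continuously differentiable, 1-periodic, `‖S‖² + ‖S'‖² + ‖S''‖² ≤ r`), the
correction coefficients `h_{j,p} = Σ_{l=1}^p ∫_{t_{l-1}}^{t_l} φ_j(t_l)(S(t) − S(t_l)) dt`
satisfy `Σ_{j=1}^p h_{j,p}² ≤ 3 r p⁻²`. -/
theorem stmt5 (p : ℕ) (hp : 2 ≤ p) (r : ℝ) (hr : 0 < r)
    (S S' S'' : ℝ → ℝ)
    (hper : Function.Periodic S 1)
    (hderiv : ∀ x, HasDerivAt S (S' x) x)
    (hderiv' : ∀ x, HasDerivAt S' (S'' x) x)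
    (hS''cont : Continuous S'')
    (hball : (∫ t in (0:ℝ)..1, S t ^ 2) + (∫ t in (0:ℝ)..1, S' t ^ 2)
        + (∫ t in (0:ℝ)..1, S'' t ^ 2) ≤ r) :
    ∑ j ∈ Finset.Icc 1 p,
        (∑ l ∈ Finset.Icc 1 p,
          ∫ t in (((l:ℝ) - 1)/p)..((l:ℝ)/p), trigBasis j ((l:ℝ)/p) * (S t - S ((l:ℝ)/p))) ^ 2
      ≤ 3 * r / (p:ℝ) ^ 2 :=
  stmt5_general p hp r S S' S'' hderiv hderiv' hball
end
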